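/- arXiv:2006.01858 — 3 statements merged into one kernel-verified Lean document; each statement's English description precedes it below -/
import Mathlib

section
/- For a square matrix M ∈ ℝ^{n×n}, the matrix exponential exp(M t) is entrywise non-negative for all t ≥ 0 if and only if M is essentially non-negative, i.e., M_{ij} ≥ 0 for all i ≠ j. -/
/-!
If the off-diagonal entries of `A` are non-negative, then `A + c • 1` is entrywise non-negative
for `c` large, so is every term of its exponential series, and `exp A = exp (-c) • exp (A + c • 1)`.
Conversely, an off-diagonal entry of `exp (t • A)` vanishes at `t = 0` and has derivative `A i j`
there, so it can stay non-negative for `t > 0` only if `A i j ≥ 0`.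
-/

open Matrix

theorem HasDerivAt.nonneg_of_le_right {f : ℝ → ℝ} {f' a : ℝ} (hf : HasDerivAt f f' a)
    (hmin : ∀ t, a < t → f a ≤ f t) : 0 ≤ f' := by
  have hslope : Filter.Tendsto (slope f a) (nhdsWithin a (Set.Ioi a)) (nhds f') :=
    (hasDerivWithinAt_iff_tendsto_slope' (lt_irrefl a)).mp hf.hasDerivWithinAt
  refine ge_of_tendsto hslope ?_
  filter_upwards [self_mem_nhdsWithin] with t (ht : a < t)
  rw [slope_def_field]
  exact div_nonneg (sub_nonneg.mpr (hmin t ht)) (sub_nonneg.mpr ht.le)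

namespace Matrix

variable {ι : Type*} [Fintype ι] [DecidableEq ι]

open scoped Norms.Operator in
theorem hasSum_exp_apply (A : Matrix ι ι ℝ) (i j : ι) :
    HasSum (fun k : ℕ => (k.factorial : ℝ)⁻¹ * (A ^ k) i j) (NormedSpace.exp A i j) :=
  Pi.hasSum.mp (Pi.hasSum.mp (NormedSpace.exp_series_hasSum_exp' (𝕂 := ℝ) A) i) j

theorem exp_apply_nonneg {A : Matrix ι ι ℝ} (hA : ∀ i j, 0 ≤ A i j) (i j : ι) :
    0 ≤ NormedSpace.exp A i j :=
  (hasSum_exp_apply A i j).nonneg fun k => mul_nonneg (by positivity) (pow_apply_nonneg hA k i j)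

open scoped Norms.Operator in
theorem exp_add_smul_one (A : Matrix ι ι ℝ) (s : ℝ) :
    NormedSpace.exp (A + s • 1) = Real.exp s • NormedSpace.exp A := by
  have hscalar : NormedSpace.exp (s • 1 : Matrix ι ι ℝ) = algebraMap ℝ _ (Real.exp s) := by
    rw [← Algebra.algebraMap_eq_smul_one, Real.exp_eq_exp_ℝ]
    exact (NormedSpace.algebraMap_exp_comm s).symm
  rw [exp_add_of_commute _ _ ((Commute.one_right A).smul_right s), hscalar, ← Algebra.commutes,
    Algebra.smul_def]

theorem exp_apply_nonneg_of_offDiag_nonneg {A : Matrix ι ι ℝ} (hA : ∀ i j, i ≠ j → 0 ≤ A i j)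
    (i j : ι) : 0 ≤ NormedSpace.exp A i j := by
  obtain ⟨c, hc⟩ := Finite.exists_le fun k => -A k k
  have hshift : ∀ k l, 0 ≤ (A + c • 1) k l := by
    intro k l
    rcases eq_or_ne k l with rfl | hkl
    · simpa [neg_le_iff_add_nonneg'] using hc k
    · simpa [one_apply_ne hkl] using hA k l hkl
  have hexp : NormedSpace.exp A = Real.exp (-c) • NormedSpace.exp (A + c • 1) := by
    rw [← exp_add_smul_one, add_assoc, ← add_smul, add_neg_cancel, zero_smul, add_zero]
  rw [hexp, smul_apply, smul_eq_mul]
  exact mul_nonneg (Real.exp_nonneg _) (exp_apply_nonneg hshift i j)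

open scoped Norms.Operator in
theorem hasDerivAt_exp_smul_apply_zero (A : Matrix ι ι ℝ) (i j : ι) :
    HasDerivAt (fun t : ℝ => NormedSpace.exp (t • A) i j) (A i j) 0 := by
  have hd : HasDerivAt (fun t : ℝ => NormedSpace.exp (t • A)) A 0 := by
    have := hasDerivAt_exp_smul_const (𝕂 := ℝ) A 0
    simp only [zero_smul, NormedSpace.exp_zero, one_mul] at this
    exact this
  exact (hasDerivAt_pi.mp (hasDerivAt_pi.mp hd i)) j

theorem apply_nonneg_of_exp_smul_apply_nonneg {A : Matrix ι ι ℝ} {i j : ι} (hij : i ≠ j)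
    (h : ∀ t : ℝ, 0 < t → 0 ≤ NormedSpace.exp (t • A) i j) : 0 ≤ A i j := by
  refine (hasDerivAt_exp_smul_apply_zero A i j).nonneg_of_le_right fun t ht => ?_
  simpa [one_apply_ne hij] using h t ht

end Matrix

theorem stmt1 {n : ℕ} (M : Matrix (Fin n) (Fin n) ℝ) :
    (∀ t : ℝ, 0 ≤ t → ∀ i j, 0 ≤ NormedSpace.exp (t • M) i j) ↔
      (∀ i j, i ≠ j → 0 ≤ M i j) := by
  refine ⟨fun h i j hij =>
    apply_nonneg_of_exp_smul_apply_nonneg hij fun t ht => h t ht.le i j, fun hM t ht => ?_⟩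
  refine exp_apply_nonneg_of_offDiag_nonneg fun i j hij => ?_
  simpa only [Matrix.smul_apply, smul_eq_mul] using mul_nonneg ht (hM i j hij)
end

section
/- Let (Y_t)_{t ≥ 0} be a right-continuous non-negative supermartingale and Λ > 0, with V_t := exp(−Λ t) Y_t. Suppose moreover V_t ≥ l on the event A_t := {ω : X_t(ω) ∈ U} for some l > 0 (for some process X and set U). Then for all T ≥ 0, P(∃ t ≥ T, X_t ∈ U) ≤ E[Y_0] / (exp(Λ T) · l). -/
/-!
On the hitting event, `Y t ≥ c := exp (Λ T) * l` for some `t ≥ T`. Along each dyadic grid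
`T + k / 2 ^ n`, optional stopping at the first passage above `c` gives Doob's maximal inequality
`c * P(Y ≥ c somewhere on the grid) ≤ E[Y T] ≤ E[Y 0]`. The grids increase with `n`, and by
right-continuity their union detects every strict exceedance of a level; letting the level increase
to `c` gives the bound.
-/

open MeasureTheory Filter Set
open scoped NNReal Topology

namespace MeasureTheory

variable {Ω ι κ : Type*} {m0 : MeasurableSpace Ω} {μ : Measure Ω}

def Filtration.comp [Preorder ι] [Preorder κ] (ℱ : Filtration ι m0) {t : κ → ι}
    (ht : Monotone t) : Filtration κ m0 where
  seq k := ℱ (t k)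
  mono' _ _ hab := ℱ.mono (ht hab)
  le' k := ℱ.le (t k)

theorem Supermartingale.comp [Preorder ι] [Preorder κ] {E : Type*} [NormedAddCommGroup E]
    [NormedSpace ℝ E] [CompleteSpace E] [LE E] {ℱ : Filtration ι m0} {Y : ι → Ω → E}
    (hY : Supermartingale Y ℱ μ) {t : κ → ι} (ht : Monotone t) :
    Supermartingale (fun k => Y (t k)) (ℱ.comp ht) μ :=
  ⟨fun k => hY.stronglyAdapted (t k), fun _ _ hij => hY.condExp_ae_le (ht hij),
    fun k => hY.integrable (t k)⟩

variable [IsFiniteMeasure μ] {𝒢 : Filtration ℕ m0} {Z : ℕ → Ω → ℝ}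

theorem Supermartingale.mul_measureReal_exists_le_le (hZ : Supermartingale Z 𝒢 μ)
    (hnn : ∀ k ω, 0 ≤ Z k ω) {c : ℝ} (hc : 0 ≤ c) (n : ℕ) :
    c * μ.real {ω | ∃ k ≤ n, c ≤ Z k ω} ≤ ∫ ω, Z 0 ω ∂μ := by
  set τ : Ω → WithTop ℕ := fun ω => (hittingBtwn Z (Ici c) 0 n ω : ℕ)
  have hτ : IsStoppingTime 𝒢 τ :=
    hZ.stronglyAdapted.adapted.isStoppingTime_hittingBtwn measurableSet_Ici
  have hτn : ∀ ω, τ ω ≤ n := fun ω => WithTop.coe_le_coe.mpr (hittingBtwn_le ω)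
  have hint : Integrable (stoppedValue Z τ) μ :=
    integrable_stoppedValue ℕ hτ hZ.integrable hτn
  have hstop : ∫ ω, stoppedValue Z τ ω ∂μ ≤ ∫ ω, Z 0 ω ∂μ := by
    have := hZ.neg.expected_stoppedValue_mono (isStoppingTime_const 𝒢 0) hτ
      (fun ω => zero_le) hτn
    simp only [stoppedValue_const, show stoppedValue (-Z) τ = -stoppedValue Z τ from rfl,
      Pi.neg_apply, integral_neg, neg_le_neg_iff] at this
    exact this
  have hsub : {ω | ∃ k ≤ n, c ≤ Z k ω} ⊆ {ω | c ≤ stoppedValue Z τ ω} := by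
    rintro ω ⟨k, hkn, hk⟩
    exact stoppedValue_hittingBtwn_mem ⟨k, ⟨zero_le, hkn⟩, hk⟩
  calc c * μ.real {ω | ∃ k ≤ n, c ≤ Z k ω}
      ≤ c * μ.real {ω | c ≤ stoppedValue Z τ ω} := by gcongr; exact measure_ne_top _ _
    _ ≤ ∫ ω, stoppedValue Z τ ω ∂μ :=
        mul_meas_ge_le_integral_of_nonneg (ae_of_all _ fun ω => hnn _ ω) hint c
    _ ≤ ∫ ω, Z 0 ω ∂μ := hstop

theorem Supermartingale.measure_exists_le_le_nat (hZ : Supermartingale Z 𝒢 μ)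
    (hnn : ∀ k ω, 0 ≤ Z k ω) {c : ℝ} (hc : 0 < c) :
    μ {ω | ∃ k, c ≤ Z k ω} ≤ ENNReal.ofReal ((∫ ω, Z 0 ω ∂μ) / c) := by
  have hunion : {ω | ∃ k, c ≤ Z k ω} = ⋃ n, {ω | ∃ k ≤ n, c ≤ Z k ω} := by
    ext ω; simp only [mem_ofPred_eq, mem_iUnion]
    exact ⟨fun ⟨k, hk⟩ => ⟨k, k, le_rfl, hk⟩, fun ⟨_, k, _, hk⟩ => ⟨k, hk⟩⟩
  have hmono : Monotone fun n => {ω | ∃ k ≤ n, c ≤ Z k ω} :=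
    fun _ _ hnm _ ⟨k, hkn, hk⟩ => ⟨k, hkn.trans hnm, hk⟩
  rw [hunion, hmono.measure_iUnion]
  refine iSup_le fun n => ?_
  rw [← ofReal_measureReal (measure_ne_top _ _)]
  refine ENNReal.ofReal_le_ofReal ((le_div_iff₀' hc).mpr ?_)
  exact hZ.mul_measureReal_exists_le_le hnn hc.le n

end MeasureTheory

theorem NNReal.exists_dyadic_mem_Ico {T t u : ℝ≥0} (hTt : T ≤ t) (htu : t < u) :
    ∃ n k : ℕ, T + k / 2 ^ n ∈ Ico t u := by
  obtain ⟨n, hn⟩ :=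
    NNReal.exists_pow_lt_of_lt_one (tsub_pos_of_lt htu) (by norm_num : (2⁻¹ : ℝ≥0) < 1)
  have h2n : (0 : ℝ≥0) < 2 ^ n := by positivity
  set k := ⌈(t - T) * 2 ^ n⌉₊
  refine ⟨n, k, ?_, ?_⟩
  · calc t = T + (t - T) := (add_tsub_cancel_of_le hTt).symm
      _ ≤ T + k / 2 ^ n := by gcongr; exact (le_div_iff₀ h2n).mpr (Nat.le_ceil _)
  · calc T + k / 2 ^ n < T + ((t - T) + 2⁻¹ ^ n) := by
          gcongr
          rw [div_lt_iff₀ h2n, add_mul, inv_pow, inv_mul_cancel₀ h2n.ne']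
          exact Nat.ceil_lt_add_one zero_le
      _ ≤ T + ((t - T) + (u - t)) := by gcongr
      _ = u := by rw [← add_assoc, add_tsub_cancel_of_le hTt, add_tsub_cancel_of_le htu.le]

namespace MeasureTheory

variable {Ω : Type*} {m0 : MeasurableSpace Ω} {μ : Measure Ω} [IsFiniteMeasure μ]
  {ℱ : Filtration ℝ≥0 m0} {Y : ℝ≥0 → Ω → ℝ}

theorem Supermartingale.measure_exists_lt_le (hY : Supermartingale Y ℱ μ)
    (hrc : ∀ ω t, ContinuousWithinAt (fun s => Y s ω) (Ici t) t) (hnn : ∀ t ω, 0 ≤ Y t ω)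
    (T : ℝ≥0) {c : ℝ} (hc : 0 < c) :
    μ {ω | ∃ t, T ≤ t ∧ c < Y t ω} ≤ ENNReal.ofReal ((∫ ω, Y T ω ∂μ) / c) := by
  set grid : ℕ → ℕ → ℝ≥0 := fun n k => T + k / 2 ^ n
  have hgrid : ∀ n, Monotone (grid n) := fun n _ _ hkl => by
    simp only [grid]; gcongr
  set D : ℕ → Set Ω := fun n => {ω | ∃ k, c ≤ Y (grid n k) ω}
  have hsub : {ω | ∃ t, T ≤ t ∧ c < Y t ω} ⊆ ⋃ n, D n := by
    rintro ω ⟨t, hTt, hct⟩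
    obtain ⟨u, htu, hu⟩ := mem_nhdsGE_iff_exists_Ico_subset.mp (hrc ω t (Ioi_mem_nhds hct))
    obtain ⟨n, k, hk⟩ := NNReal.exists_dyadic_mem_Ico hTt htu
    exact mem_iUnion.mpr ⟨n, k, (hu hk).le⟩
  have hD : Monotone D := by
    refine monotone_nat_of_le_succ fun n ω ⟨k, hk⟩ => ⟨2 * k, ?_⟩
    have : grid (n + 1) (2 * k) = grid n k := by
      simp only [grid]
      push_cast
      rw [pow_succ, mul_comm (2 : ℝ≥0), mul_div_mul_right _ _ two_ne_zero]
    rwa [this]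
  refine (measure_mono hsub).trans ?_
  rw [hD.measure_iUnion]
  refine iSup_le fun n => ?_
  simpa [grid] using (hY.comp (hgrid n)).measure_exists_le_le_nat (fun k => hnn _) hc

theorem Supermartingale.measure_exists_le_le (hY : Supermartingale Y ℱ μ)
    (hrc : ∀ ω t, ContinuousWithinAt (fun s => Y s ω) (Ici t) t) (hnn : ∀ t ω, 0 ≤ Y t ω)
    (T : ℝ≥0) {c : ℝ} (hc : 0 < c) :
    μ {ω | ∃ t, T ≤ t ∧ c ≤ Y t ω} ≤ ENNReal.ofReal ((∫ ω, Y T ω ∂μ) / c) := by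
  have hlt : ∀ c' ∈ Ioo 0 c,
      μ {ω | ∃ t, T ≤ t ∧ c ≤ Y t ω} ≤ ENNReal.ofReal ((∫ ω, Y T ω ∂μ) / c') :=
    fun c' hc' => by
      refine le_trans (measure_mono ?_) (hY.measure_exists_lt_le hrc hnn T hc'.1)
      exact fun ω ⟨t, hTt, ht⟩ => ⟨t, hTt, hc'.2.trans_le ht⟩
  have hlim : Tendsto (fun c' => ENNReal.ofReal ((∫ ω, Y T ω ∂μ) / c')) (𝓝[<] c)
      (𝓝 (ENNReal.ofReal ((∫ ω, Y T ω ∂μ) / c))) :=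
    ((ENNReal.continuous_ofReal.tendsto _).comp
      (tendsto_const_nhds.div tendsto_id hc.ne')).mono_left nhdsWithin_le_nhds
  exact ge_of_tendsto hlim (eventually_of_mem (Ioo_mem_nhdsLT hc) hlt)

end MeasureTheory

theorem stmt6 {Ω : Type*} {m0 : MeasurableSpace Ω} (μ : Measure Ω)
    [IsProbabilityMeasure μ] (ℱ : Filtration ℝ≥0 m0) (Y : ℝ≥0 → Ω → ℝ)
    (hsup : Supermartingale Y ℱ μ)
    (hrc : ∀ ω, ∀ t : ℝ≥0, ContinuousWithinAt (fun s => Y s ω) (Set.Ici t) t)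
    (hnn : ∀ (t : ℝ≥0) ω, 0 ≤ Y t ω)
    (Λ l : ℝ) (hΛ : 0 < Λ) (hl : 0 < l)
    {E : Type*} (X : ℝ≥0 → Ω → E) (U : Set E)
    (hbar : ∀ (t : ℝ≥0) ω, X t ω ∈ U → l ≤ Real.exp (-(Λ * t)) * Y t ω)
    (T : ℝ≥0) :
    μ {ω | ∃ t : ℝ≥0, T ≤ t ∧ X t ω ∈ U} ≤
      ENNReal.ofReal ((∫ ω, Y 0 ω ∂μ) / (Real.exp (Λ * T) * l)) := by
  have hc : 0 < Real.exp (Λ * T) * l := by positivity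
  have hhit : {ω | ∃ t : ℝ≥0, T ≤ t ∧ X t ω ∈ U} ⊆
      {ω | ∃ t, T ≤ t ∧ Real.exp (Λ * T) * l ≤ Y t ω} := by
    rintro ω ⟨t, hTt, hX⟩
    have hY := hbar t ω hX
    rw [Real.exp_neg, inv_mul_eq_div, le_div_iff₀ (Real.exp_pos _), mul_comm] at hY
    exact ⟨t, hTt, le_trans (by gcongr) hY⟩
  have hE : ∫ ω, Y T ω ∂μ ≤ ∫ ω, Y 0 ω ∂μ := by
    simpa using hsup.setIntegral_le (zero_le : 0 ≤ T) MeasurableSet.univ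
  calc μ _ ≤ μ {ω | ∃ t, T ≤ t ∧ Real.exp (Λ * T) * l ≤ Y t ω} := measure_mono hhit
    _ ≤ ENNReal.ofReal ((∫ ω, Y T ω ∂μ) / (Real.exp (Λ * T) * l)) :=
        hsup.measure_exists_le_le hrc hnn T hc
    _ ≤ _ := by gcongr
end

section
/- Let Λ, M ∈ ℝ^{m×m} be matrices such that all eigenvalues of Λ − M have positive real parts, and let γ ∈ ℝ^m be a positive vector. Suppose S := sup_{t ≥ 0} ‖exp(−Λ t)‖ < ∞. Then there exists T* ≥ 0 such that for all T ≥ T* and all t ≥ T, the componentwise inequality exp(−Λ(t−T)) exp(−(Λ−M) T) γ ≤ γ holds. -/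
open Filter Topology NormedSpace Set
open scoped Matrix

/-!
Every eigenvalue of `-(Λ - M)` has negative real part, and every point of the spectrum of the
matrix exponential `exp (-(Λ - M))` is the exponential of such an eigenvalue (take a common
eigenvector of the two commuting matrices). So the spectral radius of `exp (-(Λ - M))` is `< 1`,
and by Gelfand's formula its powers, hence also `exp (-T (Λ - M))` for real `T → ∞`, tend to `0`.
Since the entries of `exp (-s Λ)` are bounded by `S` for `s ≥ 0`, every entry of
`exp (-(t - T) Λ) exp (-T (Λ - M)) γ` is at most `m S ‖exp (-T (Λ - M)) γ‖∞`, which is below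
every `γ i` once `T` is large.
-/

section BanachAlgebra

variable {A : Type*} [NormedRing A] [CompleteSpace A]

theorem tendsto_pow_atTop_nhds_zero_of_spectralRadius_lt_one [NormedAlgebra ℂ A] {a : A}
    (h : spectralRadius ℂ a < 1) : Tendsto (fun n : ℕ => a ^ n) atTop (𝓝 0) := by
  obtain ⟨r, hr, hr1⟩ := ENNReal.lt_iff_exists_nnreal_btwn.1 h
  refine squeeze_zero_norm' ?_ (tendsto_pow_atTop_nhds_zero_of_lt_one r.coe_nonneg
    (by exact_mod_cast hr1))
  filter_upwards [(spectrum.pow_nnnorm_pow_one_div_tendsto_nhds_spectralRadius a).eventually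
    (gt_mem_nhds hr), eventually_gt_atTop 0] with n hn hn0
  rw [one_div, ENNReal.rpow_inv_lt_iff (by positivity), ENNReal.rpow_natCast] at hn
  exact_mod_cast hn.le

theorem tendsto_exp_smul_atTop_nhds_zero_of_tendsto_pow [NormedAlgebra ℝ A] {a : A}
    (h : Tendsto (fun n : ℕ => exp a ^ n) atTop (𝓝 0)) :
    Tendsto (fun t : ℝ => exp (t • a)) atTop (𝓝 0) := by
  let _ : NormedAlgebra ℚ A := NormedAlgebra.restrictScalars ℚ ℝ A
  have hsplit (t : ℝ) : exp (t • a) = exp ((t - ⌊t⌋₊) • a) * exp a ^ ⌊t⌋₊ := by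
    rw [← exp_nsmul, ← Nat.cast_smul_eq_nsmul ℝ, ← exp_add_of_commute
      (((Commute.refl a).smul_left _).smul_right _), ← add_smul, sub_add_cancel]
  obtain ⟨C, hC⟩ := isCompact_Icc.exists_bound_of_continuousOn (s := Icc (0 : ℝ) 1)
    (f := fun s : ℝ => exp (s • a)) (by fun_prop)
  have hbdd : IsBoundedUnder (· ≤ ·) atTop fun t : ℝ => ‖exp ((t - ⌊t⌋₊) • a)‖ := by
    refine ⟨C, eventually_map.2 ?_⟩
    filter_upwards [eventually_ge_atTop 0] with t ht
    exact hC _ ⟨sub_nonneg.2 (Nat.floor_le ht), by linarith [Nat.lt_floor_add_one t]⟩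
  exact (isBoundedUnder_le_mul_tendsto_zero hbdd (h.comp tendsto_nat_floor_atTop)).congr
    fun t => (hsplit t).symm

end BanachAlgebra

theorem Module.End.exists_hasEigenvector_of_commute {K V : Type*} [Field K] [IsAlgClosed K]
    [AddCommGroup V] [Module K V] [FiniteDimensional K V] {f g : Module.End K V}
    (hfg : Commute f g) {μ : K} (hμ : g.HasEigenvalue μ) :
    ∃ c v, f.HasEigenvector c v ∧ g.HasEigenvector μ v := by
  have hmaps : ∀ x ∈ g.eigenspace μ, f x ∈ g.eigenspace μ :=
    fun _ hx => Module.End.mapsTo_genEigenspace_of_comm hfg.symm μ 1 hx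
  have : Nontrivial (g.eigenspace μ) := Submodule.nontrivial_iff_ne_bot.2 hμ
  obtain ⟨c, hc⟩ := Module.End.exists_eigenvalue (f.restrict hmaps)
  obtain ⟨w, hw⟩ := hc.exists_hasEigenvector
  refine ⟨c, w, Module.End.hasEigenvector_iff.2 ⟨?_, by simpa using hw.2⟩,
    Module.End.hasEigenvector_iff.2 ⟨w.2, by simpa using hw.2⟩⟩
  exact f.eigenspace_restrict_le_eigenspace hmaps c ⟨w, hw.1, rfl⟩

namespace Matrix

theorem tendsto_nhds_zero_of_tendsto_map_ofReal {ι m n : Type*} {l : Filter ι}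
    {f : ι → Matrix m n ℝ} (h : Tendsto (fun i => (f i).map (algebraMap ℝ ℂ)) l (𝓝 0)) :
    Tendsto f l (𝓝 0) := by
  simpa [Function.comp_def, map_map] using
    ((continuous_id.matrix_map Complex.continuous_re).tendsto 0).comp h

section ExpSpectrum

attribute [local instance] Matrix.linftyOpNormedRing Matrix.linftyOpNormedAlgebra

variable {n : Type*} [Fintype n] [DecidableEq n]

theorem exp_mulVec_of_mulVec_eq_smul {𝕂 : Type*} [RCLike 𝕂] {B : Matrix n n 𝕂} {v : n → 𝕂}
    {c : 𝕂} (h : B *ᵥ v = c • v) : exp B *ᵥ v = exp c • v := by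
  have hpow (k : ℕ) : B ^ k *ᵥ v = c ^ k • v := by
    induction k with
    | zero => simp
    | succ k ih => rw [pow_succ, ← mulVec_mulVec, h, mulVec_smul, ih, smul_smul, pow_succ']
  let L : Matrix n n 𝕂 →ₗ[𝕂] n → 𝕂 := LinearMap.applyₗ v ∘ₗ toLin'.toLinearMap
  have hL : Continuous L := continuous_id.matrix_mulVec continuous_const
  have hB := (exp_series_hasSum_exp' (𝕂 := 𝕂) B).map L hL
  refine hB.unique ?_
  convert (exp_series_hasSum_exp' (𝕂 := 𝕂) c).smul_const v using 1
  ext1 k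
  change ((k.factorial : 𝕂)⁻¹ • B ^ k) *ᵥ v = _
  rw [smul_mulVec, hpow, smul_smul, smul_eq_mul]

theorem spectrum_exp_subset (B : Matrix n n ℂ) :
    spectrum ℂ (exp B) ⊆ Complex.exp '' spectrum ℂ B := by
  intro μ hμ
  rw [← spectrum_toLin', ← Module.End.hasEigenvalue_iff_mem_spectrum] at hμ
  have hcomm : Commute (toLin' B) (toLin' (exp B)) :=
    ((Commute.refl B).exp_right).map toLinAlgEquiv'
  obtain ⟨c, v, hc, hv⟩ := Module.End.exists_hasEigenvector_of_commute hcomm hμ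
  refine ⟨c, ?_, ?_⟩
  · rw [← spectrum_toLin']
    exact Module.End.hasEigenvalue_iff_mem_spectrum.1
      (Module.End.hasEigenvalue_of_hasEigenvector hc)
  · have hBv : B *ᵥ v = c • v := by simpa using hc.apply_eq_smul
    have hexp : exp B *ᵥ v = μ • v := by simpa using hv.apply_eq_smul
    rw [Complex.exp_eq_exp_ℂ]
    exact smul_left_injective ℂ hv.2 ((exp_mulVec_of_mulVec_eq_smul hBv).symm.trans hexp)

theorem spectralRadius_exp_lt_one {B : Matrix n n ℂ} (h : ∀ z ∈ spectrum ℂ B, z.re < 0) :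
    spectralRadius ℂ (exp B) < 1 := by
  cases isEmpty_or_nonempty n
  · rw [spectralRadius, spectrum.of_subsingleton]
    simp
  · refine spectrum.spectralRadius_lt_of_forall_lt _ fun μ hμ => ?_
    obtain ⟨c, hc, rfl⟩ := spectrum_exp_subset B hμ
    rw [← NNReal.coe_lt_coe, coe_nnnorm, Complex.norm_exp]
    simpa using h c hc

theorem tendsto_exp_neg_smul_atTop_nhds_zero {X : Matrix n n ℝ}
    (h : ∀ z ∈ spectrum ℂ (X.map (algebraMap ℝ ℂ)), 0 < z.re) :
    Tendsto (fun t : ℝ => exp ((-t) • X)) atTop (𝓝 0) := by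
  have hneg : ∀ z ∈ spectrum ℂ ((-X).map (algebraMap ℝ ℂ)), z.re < 0 := by
    intro z hz
    rw [Matrix.map_neg _ (map_neg _), ← spectrum.neg_eq] at hz
    simpa using h (-z) hz
  have hexp : (exp (-X)).map (algebraMap ℝ ℂ) = exp ((-X).map (algebraMap ℝ ℂ)) :=
    map_exp (F := Matrix n n ℝ →+* Matrix n n ℂ) (algebraMap ℝ ℂ).mapMatrix
      (continuous_id.matrix_map (continuous_algebraMap ℝ ℂ)) _
  have hpow : Tendsto (fun k : ℕ => exp (-X) ^ k) atTop (𝓝 0) := by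
    have hc : Tendsto (fun k : ℕ => exp ((-X).map (algebraMap ℝ ℂ)) ^ k) atTop (𝓝 0) :=
      tendsto_pow_atTop_nhds_zero_of_spectralRadius_lt_one (spectralRadius_exp_lt_one hneg)
    refine tendsto_nhds_zero_of_tendsto_map_ofReal (hc.congr fun k => ?_)
    rw [Matrix.map_pow, hexp]
  exact (tendsto_exp_smul_atTop_nhds_zero_of_tendsto_pow hpow).congr fun t =>
    congrArg exp ((smul_neg t X).trans (neg_smul t X).symm)

end ExpSpectrum

theorem mulVec_apply_le_of_abs_le {m n : Type*} [Fintype n] {P : Matrix m n ℝ} {S : ℝ}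
    (hP : ∀ i j, |P i j| ≤ S) (w : n → ℝ) (i : m) :
    (P *ᵥ w) i ≤ Fintype.card n * S * ‖w‖ := calc
  (P *ᵥ w) i ≤ ∑ j, |P i j * w j| := (le_abs_self _).trans (Finset.abs_sum_le_sum_abs _ _)
  _ = ∑ j, |P i j| * |w j| := by simp only [abs_mul]
  _ ≤ ∑ _j, S * ‖w‖ := Finset.sum_le_sum fun j _ =>
    mul_le_mul (hP i j) (norm_le_pi_norm w j) (abs_nonneg _) ((abs_nonneg _).trans (hP i j))
  _ = Fintype.card n * S * ‖w‖ := by simp [mul_assoc]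

end Matrix

theorem stmt8 {m : ℕ} (Λ M : Matrix (Fin m) (Fin m) ℝ)
    (heig : ∀ z ∈ spectrum ℂ ((Λ - M).map (algebraMap ℝ ℂ)), 0 < z.re)
    (γ : Fin m → ℝ) (hγ : ∀ i, 0 < γ i)
    (S : ℝ) (hS : ∀ t : ℝ, 0 ≤ t → ∀ i j, |NormedSpace.exp ((-t) • Λ) i j| ≤ S) :
    ∃ Tstar : ℝ, 0 ≤ Tstar ∧ ∀ T, Tstar ≤ T → ∀ t, T ≤ t →
      (NormedSpace.exp ((-(t - T)) • Λ)).mulVec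
        ((NormedSpace.exp ((-T) • (Λ - M))).mulVec γ) ≤ γ := by
  have hsmall : Tendsto (fun T : ℝ => m * S * ‖exp ((-T) • (Λ - M)) *ᵥ γ‖) atTop (𝓝 0) := by
    simpa using (((continuous_id.matrix_mulVec continuous_const).tendsto 0).comp
      (Matrix.tendsto_exp_neg_smul_atTop_nhds_zero heig)).norm.const_mul ((m : ℝ) * S)
  have hev : ∀ᶠ T : ℝ in atTop, ∀ i, m * S * ‖exp ((-T) • (Λ - M)) *ᵥ γ‖ ≤ γ i :=
    eventually_all.2 fun i => hsmall.eventually (ge_mem_nhds (hγ i))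
  obtain ⟨T₀, hT₀⟩ := eventually_atTop.1 hev
  refine ⟨max T₀ 0, le_max_right _ _, fun T hT t ht i => ?_⟩
  calc _ ≤ m * S * ‖exp ((-T) • (Λ - M)) *ᵥ γ‖ := by
        simpa only [Fintype.card_fin] using
          Matrix.mulVec_apply_le_of_abs_le (hS (t - T) (by linarith)) _ i
    _ ≤ γ i := hT₀ T (le_of_max_le_left hT) i
end
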